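/- In a linear finite-field deterministic network with N source nodes and a single destination d, if the rate tuple (R_1,…,R_N) ∈ ℝ_{≥0}^N is achievable, then for every nonempty subset S ⊆ {1,…,N} one has Σ_{i∈S} R_i ≤ rank(G_{S,S^c}), where the rank is taken over F_2. (Converse part of Theorem 1.) -/

import Mathlib

open Filter Topology

/-- The `q × q` down-shift matrix over `𝔽₂`: entry `(k, ℓ)` is `1` iff `k = ℓ + 1`. -/
def downShift (q : ℕ) : Matrix (Fin q) (Fin q) (ZMod 2) :=
  Matrix.of fun k l => if (k : ℕ) = (l : ℕ) + 1 then 1 else 0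

/-- A linear finite-field deterministic network with source nodes `1,…,N` (modeled as `Fin N`)
and a single destination `d` (modeled as `none : Option (Fin N)`).  Every edge `(i,j)` carries
an integer level `n i j ≤ q`, and the underlying directed graph is acyclic (it admits a
topological ordering). -/
structure LFFDNet (N q : ℕ) where
  E : Finset (Fin N × Option (Fin N))
  n : Fin N → Option (Fin N) → ℕ
  hq : 1 ≤ q
  hn : ∀ e ∈ E, n e.1 e.2 ≤ q
  acyclic : ∃ ρ : Option (Fin N) → ℕ, ∀ e ∈ E, ρ (some e.1) < ρ e.2

/-- The channel matrix of the link from node `i` to node `j`: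
`S^(q - n i j)` if `(i,j)` is an edge, and `0` otherwise. -/
def linkMat {N q : ℕ} (net : LFFDNet N q) (i : Fin N) (j : Option (Fin N)) :
    Matrix (Fin q) (Fin q) (ZMod 2) :=
  if (i, j) ∈ net.E then downShift q ^ (q - net.n i j) else 0

/-- The cut transfer matrix `G_{S,Sᶜ}` of a cut `S ⊆ {1,…,N}`: the block matrix whose
`(j, i)` block (for `j ∈ Sᶜ` — which always contains the destination — and `i ∈ S`)
is the channel matrix of the link from `i` to `j`. -/
def cutMatrix {N q : ℕ} (net : LFFDNet N q) (S : Finset (Fin N)) :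
    Matrix ((↥((S.image some)ᶜ)) × Fin q) ((↥S) × Fin q) (ZMod 2) :=
  Matrix.of fun jr ic => linkMat net ic.1.1 jr.1.1 jr.2 ic.2

/-- Cardinality `⌈2^(T·r)⌉` of the message set of a node with rate `r` and block length `T`. -/
noncomputable def msgCard (T : ℕ) (r : ℝ) : ℕ := ⌈(2 : ℝ) ^ ((T : ℝ) * r)⌉₊

/-- A `(T, R₁, …, R_N)` code: strictly causal encoders (the signal transmitted by node `i`
at time `t` depends on its message and on its received signals at times `< t`), and a decoder
at the destination mapping its `T` received signals to a tuple of message estimates. -/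
structure Code {N q : ℕ} (net : LFFDNet N q) (T : ℕ) (R : Fin N → ℝ) where
  enc : (i : Fin N) → (t : Fin T) → Fin (msgCard T (R i)) →
      ((s : Fin (t : ℕ)) → Fin q → ZMod 2) → (Fin q → ZMod 2)
  dec : (Fin T → Fin q → ZMod 2) → ((i : Fin N) → Fin (msgCard T (R i)))

/-- The signal transmitted by node `i` at time `t`, determined by the messages `w`, the
encoders, and the network equations. -/
noncomputable def transmit {N q : ℕ} (net : LFFDNet N q) {T : ℕ} {R : Fin N → ℝ}
    (C : Code net T R) (w : (i : Fin N) → Fin (msgCard T (R i))) :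
    (t : ℕ) → Fin N → (Fin q → ZMod 2)
  | t, i =>
    if h : t < T then
      C.enc i ⟨t, h⟩ (w i)
        (fun s => ∑ i' : Fin N, (linkMat net i' (some i)).mulVec (transmit net C w s i'))
    else 0
termination_by t _ => t
decreasing_by exact s.isLt

/-- The signal received by node `j` at time `t`:
`y_j[t] = ∑_{i : (i,j) ∈ E} S^(q - n i j) x_i[t]`. -/
noncomputable def receivedAt {N q : ℕ} (net : LFFDNet N q) {T : ℕ} {R : Fin N → ℝ}
    (C : Code net T R) (w : (i : Fin N) → Fin (msgCard T (R i)))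
    (j : Option (Fin N)) (t : ℕ) : Fin q → ZMod 2 :=
  ∑ i' : Fin N, (linkMat net i' j).mulVec (transmit net C w t i')

/-- The average probability of error of a code, for independent messages uniformly
distributed on the message sets. -/
noncomputable def Perr {N q : ℕ} (net : LFFDNet N q) {T : ℕ} {R : Fin N → ℝ}
    (C : Code net T R) : ℝ :=
  (Finset.univ.filter fun w : (i : Fin N) → Fin (msgCard T (R i)) =>
      C.dec (fun t => receivedAt net C w none t) ≠ w).card /
    (Fintype.card ((i : Fin N) → Fin (msgCard T (R i))) : ℝ)

/-- A nonnegative rate tuple is achievable if there is a sequence of codes whose block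
lengths tend to infinity and whose error probabilities tend to `0`. -/
def Achievable {N q : ℕ} (net : LFFDNet N q) (R : Fin N → ℝ) : Prop :=
  (∀ i, 0 ≤ R i) ∧
  ∃ (Tk : ℕ → ℕ) (Ck : (k : ℕ) → Code net (Tk k) R),
    Tendsto Tk atTop atTop ∧ Tendsto (fun k => Perr net (Ck k)) atTop (𝓝 0)

/-
Fix a cut `S`. By strict causality and induction on time, the signals of the nodes outside `S`,
hence everything the destination receives, are determined by the messages outside `S` and by
the signals `G_{S,Sᶜ} x_S[t]` crossing the cut, each ranging over a set of size
`2^(rank G_{S,Sᶜ})`. So the decoder is correct on at most `∏_{i ∉ S} |W_i| · 2^(T rank G_{S,Sᶜ})`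
message tuples, whence `1 - P_e ≤ 2^(T (rank G_{S,Sᶜ} - ∑_{i ∈ S} R_i))`. If the cut-set
inequality failed, this bound would tend to `0`, contradicting `P_e → 0`.
-/

theorem some_mem_compl_image_some {α : Type*} [Fintype α] [DecidableEq α] {S : Finset α}
    {a : α} (ha : a ∉ S) : some a ∈ (S.image some)ᶜ := by
  simpa using ha

theorem natCard_range_mulVecLin {K m n : Type*} [Field K] [Fintype K] [Fintype m] [Fintype n]
    [DecidableEq n] (A : Matrix m n K) :
    Nat.card (LinearMap.range A.mulVecLin) = Fintype.card K ^ A.rank := by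
  rw [Module.natCard_eq_pow_finrank (K := K), Nat.card_eq_fintype_card]
  rfl

theorem rpow_mul_le_msgCard (T : ℕ) (r : ℝ) : (2 : ℝ) ^ ((T : ℝ) * r) ≤ msgCard T r :=
  Nat.le_ceil _

theorem msgCard_pos (T : ℕ) (r : ℝ) : 0 < msgCard T r :=
  Nat.ceil_pos.mpr (Real.rpow_pos_of_pos two_pos _)

section CutSet

variable {N q : ℕ} {net : LFFDNet N q} {T : ℕ} {R : Fin N → ℝ} (C : Code net T R)

theorem transmit_eq_ite (w : (i : Fin N) → Fin (msgCard T (R i))) (t : ℕ) (i : Fin N) :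
    transmit net C w t i =
      if h : t < T then C.enc i ⟨t, h⟩ (w i) (fun s => receivedAt net C w (some i) s)
      else 0 := by
  rw [transmit]
  rfl

/-- The signal `G_{S,Sᶜ} x_S[t]` that crosses the cut `S` at time `t`. -/
noncomputable def cutSignal (S : Finset (Fin N)) (w : (i : Fin N) → Fin (msgCard T (R i)))
    (t : ℕ) : (↥((S.image some)ᶜ)) × Fin q → ZMod 2 :=
  (cutMatrix net S).mulVec fun ic => transmit net C w t ic.1.1 ic.2

theorem cutSignal_mem_range (S : Finset (Fin N)) (w : (i : Fin N) → Fin (msgCard T (R i)))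
    (t : ℕ) : cutSignal C S w t ∈ LinearMap.range (cutMatrix net S).mulVecLin :=
  ⟨_, rfl⟩

theorem receivedAt_eq_cutSignal_add (S : Finset (Fin N))
    (w : (i : Fin N) → Fin (msgCard T (R i))) (t : ℕ) (j : ↥((S.image some)ᶜ)) :
    receivedAt net C w j t = (fun r => cutSignal C S w t (j, r)) +
      ∑ i ∈ Sᶜ, (linkMat net i j).mulVec (transmit net C w t i) := by
  rw [receivedAt, ← Finset.sum_add_sum_compl S]
  congr 1
  funext r
  rw [Finset.sum_apply, ← Finset.sum_coe_sort S]
  simp only [cutSignal, Matrix.mulVec, dotProduct, cutMatrix, Matrix.of_apply,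
    Fintype.sum_prod_type]

variable {C}

theorem receivedAt_eq_of_cutSignal_eq {S : Finset (Fin N)}
    {w w' : (i : Fin N) → Fin (msgCard T (R i))} {t : ℕ}
    (hcut : cutSignal C S w t = cutSignal C S w' t)
    (hout : ∀ i ∉ S, transmit net C w t i = transmit net C w' t i)
    (j : ↥((S.image some)ᶜ)) :
    receivedAt net C w j t = receivedAt net C w' j t := by
  rw [receivedAt_eq_cutSignal_add, receivedAt_eq_cutSignal_add, hcut]
  congr 1
  exact Finset.sum_congr rfl fun i hi => by rw [hout i (Finset.mem_compl.mp hi)]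

theorem transmit_eq_of_cutSignal_eq {S : Finset (Fin N)}
    {w w' : (i : Fin N) → Fin (msgCard T (R i))} (hmsg : ∀ i ∉ S, w i = w' i)
    (hcut : ∀ t < T, cutSignal C S w t = cutSignal C S w' t) :
    ∀ t < T, ∀ i ∉ S, transmit net C w t i = transmit net C w' t i := by
  intro t
  induction t using Nat.strong_induction_on with
  | _ t ih =>
    intro ht i hi
    have hseen : (fun s : Fin t => receivedAt net C w (some i) s) =
        fun s : Fin t => receivedAt net C w' (some i) s := by
      funext s
      exact receivedAt_eq_of_cutSignal_eq (hcut s (s.isLt.trans ht))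
        (ih s s.isLt (s.isLt.trans ht)) ⟨some i, some_mem_compl_image_some hi⟩
    rw [transmit_eq_ite, transmit_eq_ite, dif_pos ht, dif_pos ht, hmsg i hi, hseen]

variable (C)

noncomputable def correctlyDecoded : Finset ((i : Fin N) → Fin (msgCard T (R i))) :=
  Finset.univ.filter fun w => C.dec (fun t => receivedAt net C w none t) = w

theorem card_correctlyDecoded_le (S : Finset (Fin N)) :
    (correctlyDecoded C).card ≤
      (∏ i ∈ Sᶜ, msgCard T (R i)) * (2 ^ (cutMatrix net S).rank) ^ T := by
  classical
  let V := LinearMap.range (cutMatrix net S).mulVecLin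
  have : Fintype V := Fintype.ofFinite V
  have hcard : Fintype.card (((i : ↥(Sᶜ)) → Fin (msgCard T (R i))) × (Fin T → V)) =
      (∏ i ∈ Sᶜ, msgCard T (R i)) * (2 ^ (cutMatrix net S).rank) ^ T := by
    rw [Fintype.card_prod, Fintype.card_pi, Fintype.card_fun, Fintype.card_fin,
      ← Nat.card_eq_fintype_card, natCard_range_mulVecLin, ZMod.card,
      ← Finset.prod_coe_sort Sᶜ fun i => msgCard T (R i)]
    simp only [Fintype.card_fin]
  rw [← hcard, ← Finset.card_univ]
  refine Finset.card_le_card_of_injOn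
    (fun w => (fun i => w i.1,
      fun t : Fin T => ⟨cutSignal C S w t, cutSignal_mem_range C S w t⟩))
    (fun _ _ => Finset.mem_univ _) ?_
  intro w hw w' hw' heq
  simp only [correctlyDecoded, Finset.coe_filter, Finset.mem_univ, true_and,
    Set.mem_ofPred_eq] at hw hw'
  simp only [Prod.mk.injEq, funext_iff, Subtype.ext_iff] at heq
  have hmsg : ∀ i ∉ S, w i = w' i := fun i hi => heq.1 ⟨i, Finset.mem_compl.mpr hi⟩
  have hcut : ∀ t < T, cutSignal C S w t = cutSignal C S w' t := fun t ht =>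
    funext (heq.2 ⟨t, ht⟩)
  have hseen : (fun t : Fin T => receivedAt net C w none t) =
      fun t : Fin T => receivedAt net C w' none t := by
    funext t
    exact receivedAt_eq_of_cutSignal_eq (hcut t t.isLt)
      (transmit_eq_of_cutSignal_eq hmsg hcut t t.isLt) ⟨none, by simp⟩
  rw [← hw, ← hw', hseen]

theorem one_sub_Perr_eq :
    1 - Perr net C = (correctlyDecoded C).card /
      (Fintype.card ((i : Fin N) → Fin (msgCard T (R i))) : ℝ) := by
  have hsplit := Finset.card_filter_add_card_filter_not (s := Finset.univ)
    (fun w : (i : Fin N) → Fin (msgCard T (R i)) =>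
      C.dec (fun t => receivedAt net C w none t) = w)
  have hpos : (0 : ℝ) < Fintype.card ((i : Fin N) → Fin (msgCard T (R i))) := by
    have : Nonempty ((i : Fin N) → Fin (msgCard T (R i))) :=
      ⟨fun i => ⟨0, msgCard_pos T (R i)⟩⟩
    exact_mod_cast Fintype.card_pos
  rw [Finset.card_univ] at hsplit
  rw [Perr, correctlyDecoded, eq_div_iff hpos.ne', sub_mul, div_mul_cancel₀ _ hpos.ne',
    ← hsplit]
  push_cast
  ring

theorem one_sub_Perr_le (S : Finset (Fin N)) :
    1 - Perr net C ≤ ((2 : ℝ) ^ (((cutMatrix net S).rank : ℝ) - ∑ i ∈ S, R i)) ^ T := by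
  have hcorrect : ((correctlyDecoded C).card : ℝ) ≤
      (∏ i ∈ Sᶜ, (msgCard T (R i) : ℝ)) * ((2 : ℝ) ^ (cutMatrix net S).rank) ^ T := by
    exact_mod_cast card_correctlyDecoded_le C S
  set K : ℝ := (2 : ℝ) ^ (cutMatrix net S).rank
  set m : Fin N → ℝ := fun i => (msgCard T (R i) : ℝ)
  have hm : ∀ i, 0 < m i := fun i => Nat.cast_pos.mpr (msgCard_pos T (R i))
  have hcard : (Fintype.card ((i : Fin N) → Fin (msgCard T (R i))) : ℝ) =
      (∏ i ∈ S, m i) * ∏ i ∈ Sᶜ, m i := by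
    rw [Finset.prod_mul_prod_compl, Fintype.card_pi]
    simp [m]
  have hrates : (2 : ℝ) ^ ((T : ℝ) * ∑ i ∈ S, R i) ≤ ∏ i ∈ S, m i := by
    rw [Finset.mul_sum, Real.rpow_sum_of_pos two_pos]
    exact Finset.prod_le_prod (fun i _ => by positivity) fun i _ => rpow_mul_le_msgCard T (R i)
  have hPS : 0 < ∏ i ∈ S, m i := Finset.prod_pos fun i _ => hm i
  have hPSc : 0 < ∏ i ∈ Sᶜ, m i := Finset.prod_pos fun i _ => hm i
  calc 1 - Perr net C = (correctlyDecoded C).card / ((∏ i ∈ S, m i) * ∏ i ∈ Sᶜ, m i) := by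
        rw [one_sub_Perr_eq, hcard]
    _ ≤ (∏ i ∈ Sᶜ, m i) * K ^ T / ((∏ i ∈ S, m i) * ∏ i ∈ Sᶜ, m i) := by gcongr
    _ = K ^ T / ∏ i ∈ S, m i := by field_simp
    _ ≤ K ^ T / (2 : ℝ) ^ ((T : ℝ) * ∑ i ∈ S, R i) := by gcongr
    _ = ((2 : ℝ) ^ (((cutMatrix net S).rank : ℝ) - ∑ i ∈ S, R i)) ^ T := by
        rw [← Real.rpow_mul_natCast two_pos.le, sub_mul, Real.rpow_sub two_pos,
          Real.rpow_mul_natCast two_pos.le, Real.rpow_natCast, mul_comm (∑ i ∈ S, R i)]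

end CutSet

/-- **Converse part of Theorem 1**: any achievable rate tuple satisfies all the cut-set
inequalities `∑_{i ∈ S} R_i ≤ rank G_{S,Sᶜ}`. -/
theorem achievable_rate_le_cutset_rank {N q : ℕ} (net : LFFDNet N q) (R : Fin N → ℝ)
    (hach : Achievable net R) :
    ∀ S : Finset (Fin N), S.Nonempty →
      ∑ i ∈ S, R i ≤ ((cutMatrix net S).rank : ℝ) := by
  intro S _
  obtain ⟨-, Tk, Ck, hT, hP⟩ := hach
  by_contra! hlt
  set a : ℝ := (2 : ℝ) ^ (((cutMatrix net S).rank : ℝ) - ∑ i ∈ S, R i)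
  have ha : a < 1 := Real.rpow_lt_one_of_one_lt_of_neg one_lt_two (sub_neg.mpr hlt)
  have hcorrect : Tendsto (fun k => 1 - Perr net (Ck k)) atTop (𝓝 1) := by
    simpa using tendsto_const_nhds.sub hP
  have hbound : Tendsto (fun k => a ^ Tk k) atTop (𝓝 0) :=
    (tendsto_pow_atTop_nhds_zero_of_lt_one (by positivity) ha).comp hT
  have : (1 : ℝ) ≤ 0 :=
    le_of_tendsto_of_tendsto' hcorrect hbound fun k => one_sub_Perr_le (Ck k) S
  norm_num at this
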